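/- arXiv:2308.07819 — 4 statements merged into one kernel-verified Lean document; each statement's English description precedes it below -/
import Mathlib

section
/- The family of morphisms δ_A := D(τ_A⁻¹) ∘ ε_{i_*(i^*(A))} ∘ φ(γ_A⁻¹) ∘ σ_{D(A)} : ψ(D(A)) → D(ψ(A)) consists of isomorphisms and is natural in A; that is, δ defines a natural isomorphism ψ ∘ D ≅ D ∘ ψᵒᵖ of functors Cᵒᵖ ⥤ C. -/
/-! Each ingredient of `δ` is the component of a natural transformation: `σ` and `τ` combine
`can` and `var` with the inverses of the natural transformations `ψ β` and `ψ α`, which are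
isomorphisms componentwise, while `γ⁻¹` and `ε` are natural by hypothesis. Whiskering and
composing these gives a natural transformation `ψ ∘ D ⟶ D ∘ ψᵒᵖ` with components `δ_A`. -/

open CategoryTheory Opposite

universe v v' u u'

variable {C : Type u} [Category.{v} C] {C' : Type u'} [Category.{v'} C']

/-- The morphism `σ_A := can_{i_!(i^*(A))} ∘ π_A : ψ(A) ⟶ φ(i_!(i^*(A)))`,
where `π_A = (ψ(β_A))⁻¹`. -/
noncomputable def sigmaMap (istar : C ⥤ C') (ishriek : C' ⥤ C)
    (adjS : ishriek ⊣ istar) (ψ φ : C ⥤ C) (can : ψ ⟶ φ)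
    [∀ A : C, IsIso (ψ.map (adjS.counit.app A))] (A : C) :
    ψ.obj A ⟶ φ.obj (ishriek.obj (istar.obj A)) :=
  inv (ψ.map (adjS.counit.app A)) ≫ can.app (ishriek.obj (istar.obj A))

/-- The morphism `τ_A := ρ_A ∘ var_{i_*(i^*(A))} : φ(i_*(i^*(A))) ⟶ ψ(A)`,
where `ρ_A = (ψ(α_A))⁻¹`. -/
noncomputable def tauMap (istar : C ⥤ C') (ipush : C' ⥤ C)
    (adjP : istar ⊣ ipush) (ψ φ : C ⥤ C) (var : φ ⟶ ψ)
    [∀ A : C, IsIso (ψ.map (adjP.unit.app A))] (A : C) :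
    φ.obj (ipush.obj (istar.obj A)) ⟶ ψ.obj A :=
  var.app (ipush.obj (istar.obj A)) ≫ inv (ψ.map (adjP.unit.app A))

instance sigmaMap_isIso (istar : C ⥤ C') (ishriek : C' ⥤ C)
    (adjS : ishriek ⊣ istar) (ψ φ : C ⥤ C) (can : ψ ⟶ φ)
    [∀ A : C, IsIso (ψ.map (adjS.counit.app A))]
    [∀ A : C, IsIso (can.app (ishriek.obj (istar.obj A)))] (A : C) :
    IsIso (sigmaMap istar ishriek adjS ψ φ can A) := by
  unfold sigmaMap; infer_instance

instance tauMap_isIso (istar : C ⥤ C') (ipush : C' ⥤ C)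
    (adjP : istar ⊣ ipush) (ψ φ : C ⥤ C) (var : φ ⟶ ψ)
    [∀ A : C, IsIso (ψ.map (adjP.unit.app A))]
    [∀ A : C, IsIso (var.app (ipush.obj (istar.obj A)))] (A : C) :
    IsIso (tauMap istar ipush adjP ψ φ var A) := by
  unfold tauMap; infer_instance

/-- The morphism `δ_A := 𝒟(τ_A⁻¹) ∘ ε_{i_*(i^*(A))} ∘ φ(γ_A⁻¹) ∘ σ_{𝒟(A)} :
ψ(𝒟(A)) ⟶ 𝒟(ψ(A))`. -/
noncomputable def deltaMap (istar : C ⥤ C') (ishriek ipush : C' ⥤ C)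
    (adjS : ishriek ⊣ istar) (adjP : istar ⊣ ipush)
    (D : Cᵒᵖ ⥤ C) (ψ φ : C ⥤ C) (can : ψ ⟶ φ) (var : φ ⟶ ψ)
    [∀ A : C, IsIso (ψ.map (adjP.unit.app A))]
    [∀ A : C, IsIso (ψ.map (adjS.counit.app A))]
    [∀ A : C, IsIso (can.app (ishriek.obj (istar.obj A)))]
    [∀ A : C, IsIso (var.app (ipush.obj (istar.obj A)))]
    (ε : D ⋙ φ ≅ φ.op ⋙ D)
    (γ : (istar ⋙ ipush).op ⋙ D ≅ D ⋙ istar ⋙ ishriek) (A : C) :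
    ψ.obj (D.obj (op A)) ⟶ D.obj (op (ψ.obj A)) :=
  sigmaMap istar ishriek adjS ψ φ can (D.obj (op A)) ≫
    φ.map (γ.inv.app (op A)) ≫
      ε.hom.app (op (ipush.obj (istar.obj A))) ≫
        D.map (inv (tauMap istar ipush adjP ψ φ var A)).op

instance deltaMap_isIso (istar : C ⥤ C') (ishriek ipush : C' ⥤ C)
    (adjS : ishriek ⊣ istar) (adjP : istar ⊣ ipush)
    (D : Cᵒᵖ ⥤ C) (ψ φ : C ⥤ C) (can : ψ ⟶ φ) (var : φ ⟶ ψ)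
    [∀ A : C, IsIso (ψ.map (adjP.unit.app A))]
    [∀ A : C, IsIso (ψ.map (adjS.counit.app A))]
    [∀ A : C, IsIso (can.app (ishriek.obj (istar.obj A)))]
    [∀ A : C, IsIso (var.app (ipush.obj (istar.obj A)))]
    (ε : D ⋙ φ ≅ φ.op ⋙ D)
    (γ : (istar ⋙ ipush).op ⋙ D ≅ D ⋙ istar ⋙ ishriek) (A : C) :
    IsIso (deltaMap istar ishriek ipush adjS adjP D ψ φ can var ε γ A) := by
  unfold deltaMap; infer_instance

instance isIso_whiskerRight_of_isIso_map_app {B M E : Type*} [Category B] [Category M]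
    [Category E] {F G : B ⥤ M} (η : F ⟶ G) (H : M ⥤ E) [∀ X, IsIso (H.map (η.app X))] :
    IsIso (Functor.whiskerRight η H) := by
  have (X : B) : IsIso ((Functor.whiskerRight η H).app X) := by dsimp; infer_instance
  exact NatIso.isIso_of_isIso_app _

section

variable (istar : C ⥤ C') (ishriek ipush : C' ⥤ C) (adjS : ishriek ⊣ istar)
  (adjP : istar ⊣ ipush) (D : Cᵒᵖ ⥤ C) (ψ φ : C ⥤ C) (can : ψ ⟶ φ) (var : φ ⟶ ψ)

noncomputable def sigmaNatTrans [∀ A : C, IsIso (ψ.map (adjS.counit.app A))] :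
    ψ ⟶ (istar ⋙ ishriek) ⋙ φ :=
  inv (Functor.whiskerRight adjS.counit ψ) ≫ Functor.whiskerLeft (istar ⋙ ishriek) can

@[simp]
lemma sigmaNatTrans_app [∀ A : C, IsIso (ψ.map (adjS.counit.app A))] (A : C) :
    (sigmaNatTrans istar ishriek adjS ψ φ can).app A =
      sigmaMap istar ishriek adjS ψ φ can A := by
  simp [sigmaNatTrans, sigmaMap, NatIso.isIso_inv_app]

noncomputable def tauNatTrans [∀ A : C, IsIso (ψ.map (adjP.unit.app A))] :
    (istar ⋙ ipush) ⋙ φ ⟶ ψ :=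
  Functor.whiskerLeft (istar ⋙ ipush) var ≫ inv (Functor.whiskerRight adjP.unit ψ)

@[simp]
lemma tauNatTrans_app [∀ A : C, IsIso (ψ.map (adjP.unit.app A))] (A : C) :
    (tauNatTrans istar ipush adjP ψ φ var).app A = tauMap istar ipush adjP ψ φ var A := by
  simp [tauNatTrans, tauMap, NatIso.isIso_inv_app]

instance tauNatTrans_isIso [∀ A : C, IsIso (ψ.map (adjP.unit.app A))]
    [∀ A : C, IsIso (var.app (ipush.obj (istar.obj A)))] :
    IsIso (tauNatTrans istar ipush adjP ψ φ var) := by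
  have (A : C) : IsIso ((tauNatTrans istar ipush adjP ψ φ var).app A) := by
    rw [tauNatTrans_app]; infer_instance
  exact NatIso.isIso_of_isIso_app _

noncomputable def deltaNatTrans
    [∀ A : C, IsIso (ψ.map (adjP.unit.app A))]
    [∀ A : C, IsIso (ψ.map (adjS.counit.app A))]
    [∀ A : C, IsIso (var.app (ipush.obj (istar.obj A)))]
    (ε : D ⋙ φ ≅ φ.op ⋙ D)
    (γ : (istar ⋙ ipush).op ⋙ D ≅ D ⋙ istar ⋙ ishriek) : D ⋙ ψ ⟶ ψ.op ⋙ D :=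
  Functor.whiskerLeft D (sigmaNatTrans istar ishriek adjS ψ φ can) ≫
    Functor.whiskerRight γ.inv φ ≫ Functor.whiskerLeft (istar ⋙ ipush).op ε.hom ≫
      Functor.whiskerRight (NatTrans.op (inv (tauNatTrans istar ipush adjP ψ φ var))) D

lemma deltaNatTrans_app
    [∀ A : C, IsIso (ψ.map (adjP.unit.app A))]
    [∀ A : C, IsIso (ψ.map (adjS.counit.app A))]
    [∀ A : C, IsIso (can.app (ishriek.obj (istar.obj A)))]
    [∀ A : C, IsIso (var.app (ipush.obj (istar.obj A)))]
    (ε : D ⋙ φ ≅ φ.op ⋙ D)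
    (γ : (istar ⋙ ipush).op ⋙ D ≅ D ⋙ istar ⋙ ishriek) (A : C) :
    (deltaNatTrans istar ishriek ipush adjS adjP D ψ φ can var ε γ).app (op A) =
      deltaMap istar ishriek ipush adjS adjP D ψ φ can var ε γ A := by
  simp [deltaNatTrans, deltaMap, NatIso.isIso_inv_app]

end

/-- the family `δ_A := 𝒟(τ_A⁻¹) ∘ ε_{i_*(i^*(A))} ∘ φ(γ_A⁻¹) ∘ σ_{𝒟(A)}`
consists of isomorphisms and is natural in `A`, i.e. it defines a natural isomorphism
`ψ ∘ 𝒟 ≅ 𝒟 ∘ ψᵒᵖ` of functors `Cᵒᵖ ⥤ C`. -/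
theorem deltaMap_isIso_and_natural (istar : C ⥤ C') (ishriek ipush : C' ⥤ C)
    (adjS : ishriek ⊣ istar) (adjP : istar ⊣ ipush)
    (D : Cᵒᵖ ⥤ C) [D.IsEquivalence] (ψ φ : C ⥤ C) (can : ψ ⟶ φ) (var : φ ⟶ ψ)
    [∀ A : C, IsIso (ψ.map (adjP.unit.app A))]
    [∀ A : C, IsIso (ψ.map (adjS.counit.app A))]
    [∀ A : C, IsIso (can.app (ishriek.obj (istar.obj A)))]
    [∀ A : C, IsIso (var.app (ipush.obj (istar.obj A)))]
    (ε : D ⋙ φ ≅ φ.op ⋙ D)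
    (γ : (istar ⋙ ipush).op ⋙ D ≅ D ⋙ istar ⋙ ishriek)
    (hγ : ∀ A : C, adjS.counit.app (D.obj (op A)) =
      γ.inv.app (op A) ≫ D.map (adjP.unit.app A).op) :
    (∀ A : C, IsIso (deltaMap istar ishriek ipush adjS adjP D ψ φ can var ε γ A)) ∧
    (∀ (A B : C) (g : A ⟶ B),
      ψ.map (D.map g.op) ≫ deltaMap istar ishriek ipush adjS adjP D ψ φ can var ε γ A =
        deltaMap istar ishriek ipush adjS adjP D ψ φ can var ε γ B ≫
          D.map (ψ.map g).op) := by
  refine ⟨fun A => inferInstance, fun A B g => ?_⟩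
  simpa only [Functor.comp_map, Functor.op_map, Quiver.Hom.unop_op, deltaNatTrans_app] using
    (deltaNatTrans istar ishriek ipush adjS adjP D ψ φ can var ε γ).naturality g.op
end

section
/- Suppose additionally that ω : 𝟭_C ≅ D ∘ Dᵒᵖ is a natural isomorphism (biduality). Then for every object A of C: D(var_{D(A)}) = ε_{D(A)} ∘ φ(ω_A) ∘ can_A ∘ ψ(ω_A)⁻¹ ∘ δ_{D(A)}⁻¹, as morphisms D(ψ(D(A))) → D(φ(D(A))); since D is fully faithful, this equation determines the variation morphism var_{D(A)} uniquely. -/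
open CategoryTheory Opposite

universe v v' u u'

variable {C : Type u} [Category.{v} C] {C' : Type u'} [Category.{v'} C']

/-- given biduality `ω : 𝟭 ≅ 𝒟 ∘ 𝒟ᵒᵖ` and the main theorem, one has
`𝒟(var_{𝒟(A)}) = ε_{𝒟(A)} ∘ φ(ω_A) ∘ can_A ∘ ψ(ω_A)⁻¹ ∘ δ_{𝒟(A)}⁻¹` as morphisms
`𝒟(ψ(𝒟(A))) ⟶ 𝒟(φ(𝒟(A)))`; since `𝒟` is fully faithful, this determines `var_{𝒟(A)}`
uniquely. -/
theorem dual_var_dual_formula (istar : C ⥤ C') (ishriek ipush : C' ⥤ C)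
    (adjS : ishriek ⊣ istar) (adjP : istar ⊣ ipush)
    (D : Cᵒᵖ ⥤ C) [D.IsEquivalence] (ψ φ : C ⥤ C) (can : ψ ⟶ φ) (var : φ ⟶ ψ)
    [∀ A : C, IsIso (ψ.map (adjP.unit.app A))]
    [∀ A : C, IsIso (ψ.map (adjS.counit.app A))]
    [∀ A : C, IsIso (can.app (ishriek.obj (istar.obj A)))]
    [∀ A : C, IsIso (var.app (ipush.obj (istar.obj A)))]
    (ε : D ⋙ φ ≅ φ.op ⋙ D)
    (γ : (istar ⋙ ipush).op ⋙ D ≅ D ⋙ istar ⋙ ishriek)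
    (hγ : ∀ A : C, adjS.counit.app (D.obj (op A)) =
      γ.inv.app (op A) ≫ D.map (adjP.unit.app A).op)
    (ω : 𝟭 C ≅ D.rightOp ⋙ D)
    (hmain : ∀ A : C,
      can.app (D.obj (op A)) ≫ ε.hom.app (op A) =
        deltaMap istar ishriek ipush adjS adjP D ψ φ can var ε γ A ≫
          D.map (var.app A).op) :
    ∀ A : C,
      D.map (var.app (D.obj (op A))).op =
        inv (deltaMap istar ishriek ipush adjS adjP D ψ φ can var ε γ (D.obj (op A))) ≫
          ψ.map (ω.inv.app A) ≫ can.app A ≫ φ.map (ω.hom.app A) ≫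
            ε.hom.app (op (D.obj (op A))) ∧
      ∀ v : φ.obj (D.obj (op A)) ⟶ ψ.obj (D.obj (op A)),
        D.map v.op =
          inv (deltaMap istar ishriek ipush adjS adjP D ψ φ can var ε γ (D.obj (op A))) ≫
            ψ.map (ω.inv.app A) ≫ can.app A ≫ φ.map (ω.hom.app A) ≫
              ε.hom.app (op (D.obj (op A))) →
          v = var.app (D.obj (op A)) := by
  intro A
  have hc : can.app (D.obj (op (D.obj (op A)))) =
      ψ.map (ω.inv.app A) ≫ can.app A ≫ φ.map (ω.hom.app A) := by
    have h := can.naturality (ω.hom.app A)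
    simp only [Functor.id_obj, Functor.comp_obj, Functor.rightOp_obj] at h
    rw [← h, ← Functor.map_comp_assoc, Iso.inv_hom_id_app]
    simp
  have hm := hmain (D.obj (op A))
  rw [hc] at hm
  have hkey : D.map (var.app (D.obj (op A))).op =
      inv (deltaMap istar ishriek ipush adjS adjP D ψ φ can var ε γ (D.obj (op A))) ≫
        ψ.map (ω.inv.app A) ≫ can.app A ≫ φ.map (ω.hom.app A) ≫
          ε.hom.app (op (D.obj (op A))) := by
    rw [IsIso.eq_inv_comp]
    simpa only [Category.assoc] using hm.symm
  refine ⟨hkey, fun v hv => ?_⟩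
  have : D.map v.op = D.map (var.app (D.obj (op A))).op := by rw [hv, hkey]
  exact Quiver.Hom.op_inj (D.map_injective this)
end

section
/- Let C be a preadditive category. Let N, V, N′, V′ be objects of C; let c : N → V, v : V → N, dcan : V′ → N′ and dvar : N′ → V′ be morphisms; let e : V ≅ V′ and d : N ≅ N′ be isomorphisms; let t : V ≅ V be an isomorphism and s : V′ → V′ a morphism. Assume: (i) c ∘ v = 𝟙_V − t (the relation can∘var = id − T̃ at the dual object); (ii) dvar ∘ dcan = 𝟙_{V′} − s (the dual of the same relation at the original object); (iii) e ∘ t⁻¹ = s ∘ e (ε conjugates T̃⁻¹ to 𝒟(T̃)); (iv) e ∘ c = dvar ∘ d (the right square of diagram (4.1) commutes); (v) d ∘ v = dcan ∘ e (the left square of diagram (4.1) commutes). Then t ∘ t = 𝟙_V, i.e. t = t⁻¹. (Hence, since the vanishing-cycle monodromy T̃ is in general not an involution, the two squares of diagram (4.1) cannot both commute with the same isomorphism δ.) -/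
/-!
Pasting the two squares shows that `e` intertwines `v ≫ c = 𝟙 - t` with
`dcan ≫ dvar = 𝟙 - s`, hence `t` with `s`. By (iii) `e` also intertwines `t⁻¹` with `s`,
so `t = t⁻¹` because `e` is an isomorphism.
-/

open CategoryTheory

universe v u

namespace CategoryTheory.Preadditive

variable {C : Type u} [Category.{v} C] [Preadditive C]

lemma comp_eq_comp_of_id_sub_comp_eq_comp_id_sub {X Y : C} {f : X ⟶ Y} {a : X ⟶ X}
    {b : Y ⟶ Y} (h : (𝟙 X - a) ≫ f = f ≫ (𝟙 Y - b)) : a ≫ f = f ≫ b := by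
  rw [sub_comp, comp_sub, Category.id_comp, Category.comp_id] at h
  exact sub_right_injective h

end CategoryTheory.Preadditive

/-- in a preadditive category, if `c ∘ v = 𝟙 - t`, `dvar ∘ dcan = 𝟙 - s`,
`e ∘ t⁻¹ = s ∘ e`, `e ∘ c = dvar ∘ d` and `d ∘ v = dcan ∘ e`, then `t ∘ t = 𝟙`,
i.e. `t = t⁻¹`.  (Hence both squares of diagram (4.1) cannot commute with the same `δ`,
since the vanishing-cycle monodromy is in general not an involution.) -/
theorem monodromy_involution_of_both_squares_commute
    {C : Type u} [Category.{v} C] [Preadditive C]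
    (N V N' V' : C) (c : N ⟶ V) (v : V ⟶ N) (dcan : V' ⟶ N') (dvar : N' ⟶ V')
    (e : V ≅ V') (d : N ≅ N') (t : V ≅ V) (s : V' ⟶ V')
    (h1 : v ≫ c = 𝟙 V - t.hom)
    (h2 : dcan ≫ dvar = 𝟙 V' - s)
    (h3 : t.inv ≫ e.hom = e.hom ≫ s)
    (h4 : c ≫ e.hom = d.hom ≫ dvar)
    (h5 : v ≫ d.hom = e.hom ≫ dcan) :
    t.hom ≫ t.hom = 𝟙 V ∧ t.hom = t.inv := by
  have hpasted : (v ≫ c) ≫ e.hom = e.hom ≫ (dcan ≫ dvar) :=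
    ((CommSq.mk h5).horiz_comp (CommSq.mk h4)).w
  rw [h1, h2] at hpasted
  have hconj : t.hom ≫ e.hom = e.hom ≫ s :=
    Preadditive.comp_eq_comp_of_id_sub_comp_eq_comp_id_sub hpasted
  have hinv : t.hom = t.inv := (cancel_mono e.hom).1 (hconj.trans h3.symm)
  exact ⟨t.hom_comp_eq_id.2 hinv, hinv⟩
end

section
/- Suppose additionally that γ̂ : D ∘ (i_! ∘ i^*)ᵒᵖ ≅ (i_* ∘ i^*) ∘ D is a natural isomorphism such that α_{D(A)} = γ̂_A ∘ D(β_A) for every object A of C. Define δ̂_A := D(σ_A) ∘ ε_{i_!(i^*(A))} ∘ φ(γ̂_A⁻¹) ∘ τ_{D(A)}⁻¹ : ψ(D(A)) → D(ψ(A)). Then each δ̂_A is an isomorphism and, for every object A of C, δ̂_A ∘ var_{D(A)} = D(can_A) ∘ ε_A, as morphisms φ(D(A)) → D(ψ(A)). (That is, replacing δ by the isomorphism δ̂ makes the variation-versus-dual-canonical square commute.) -/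
/-!
Precomposing `δ̂_A` with `var_{𝒟(A)}` cancels `τ_{𝒟(A)}⁻¹` down to `φ(α_{𝒟(A)})`, which the
compatibility of `γ̂` with the units turns into `φ(𝒟(β_A))`. Naturality of `ε` moves this past
`ε`, where it meets `𝒟(σ_A)`; and `σ_A` followed by `φ(β_A)` is `can_A` by naturality of `can`.
-/

open CategoryTheory Opposite

universe v v' u u'

variable {C : Type u} [Category.{v} C] {C' : Type u'} [Category.{v'} C']

/-- The morphism `δ̂_A := 𝒟(σ_A) ∘ ε_{i_!(i^*(A))} ∘ φ(γ̂_A⁻¹) ∘ τ_{𝒟(A)}⁻¹ :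
ψ(𝒟(A)) ⟶ 𝒟(ψ(A))`. -/
noncomputable def deltaHatMap (istar : C ⥤ C') (ishriek ipush : C' ⥤ C)
    (adjS : ishriek ⊣ istar) (adjP : istar ⊣ ipush)
    (D : Cᵒᵖ ⥤ C) (ψ φ : C ⥤ C) (can : ψ ⟶ φ) (var : φ ⟶ ψ)
    [∀ A : C, IsIso (ψ.map (adjP.unit.app A))]
    [∀ A : C, IsIso (ψ.map (adjS.counit.app A))]
    [∀ A : C, IsIso (can.app (ishriek.obj (istar.obj A)))]
    [∀ A : C, IsIso (var.app (ipush.obj (istar.obj A)))]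
    (ε : D ⋙ φ ≅ φ.op ⋙ D)
    (γhat : (istar ⋙ ishriek).op ⋙ D ≅ D ⋙ istar ⋙ ipush) (A : C) :
    ψ.obj (D.obj (op A)) ⟶ D.obj (op (ψ.obj A)) :=
  inv (tauMap istar ipush adjP ψ φ var (D.obj (op A))) ≫
    φ.map (γhat.inv.app (op A)) ≫
      ε.hom.app (op (ishriek.obj (istar.obj A))) ≫
        D.map (sigmaMap istar ishriek adjS ψ φ can A).op

section

variable {istar : C ⥤ C'} {ishriek ipush : C' ⥤ C} {ψ φ : C ⥤ C}

theorem sigmaMap_comp_map_counit (adjS : ishriek ⊣ istar) (can : ψ ⟶ φ)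
    [∀ A : C, IsIso (ψ.map (adjS.counit.app A))] (A : C) :
    sigmaMap istar ishriek adjS ψ φ can A ≫ φ.map (adjS.counit.app A) = can.app A := by
  rw [sigmaMap, Category.assoc, ← can.naturality, IsIso.inv_hom_id_assoc]
  rfl

theorem var_comp_inv_tauMap (adjP : istar ⊣ ipush) (var : φ ⟶ ψ)
    [∀ A : C, IsIso (ψ.map (adjP.unit.app A))]
    [∀ A : C, IsIso (var.app (ipush.obj (istar.obj A)))] (B : C) :
    var.app B ≫ inv (tauMap istar ipush adjP ψ φ var B) = φ.map (adjP.unit.app B) := by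
  unfold tauMap
  rw [IsIso.inv_comp, IsIso.inv_inv, ← var.naturality_assoc, IsIso.hom_inv_id,
    Category.comp_id]

end

/-- given `γ̂` with `α_{𝒟(A)} = γ̂_A ∘ 𝒟(β_A)`, each
`δ̂_A := 𝒟(σ_A) ∘ ε_{i_!(i^*(A))} ∘ φ(γ̂_A⁻¹) ∘ τ_{𝒟(A)}⁻¹` is an isomorphism and
`δ̂_A ∘ var_{𝒟(A)} = 𝒟(can_A) ∘ ε_A` as morphisms `φ(𝒟(A)) ⟶ 𝒟(ψ(A))`. -/
theorem var_dual_eq_dual_can (istar : C ⥤ C') (ishriek ipush : C' ⥤ C)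
    (adjS : ishriek ⊣ istar) (adjP : istar ⊣ ipush)
    (D : Cᵒᵖ ⥤ C) [D.IsEquivalence] (ψ φ : C ⥤ C) (can : ψ ⟶ φ) (var : φ ⟶ ψ)
    [∀ A : C, IsIso (ψ.map (adjP.unit.app A))]
    [∀ A : C, IsIso (ψ.map (adjS.counit.app A))]
    [∀ A : C, IsIso (can.app (ishriek.obj (istar.obj A)))]
    [∀ A : C, IsIso (var.app (ipush.obj (istar.obj A)))]
    (ε : D ⋙ φ ≅ φ.op ⋙ D)
    (γhat : (istar ⋙ ishriek).op ⋙ D ≅ D ⋙ istar ⋙ ipush)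
    (hγhat : ∀ A : C, adjP.unit.app (D.obj (op A)) =
      D.map (adjS.counit.app A).op ≫ γhat.hom.app (op A)) :
    ∀ A : C,
      IsIso (deltaHatMap istar ishriek ipush adjS adjP D ψ φ can var ε γhat A) ∧
      var.app (D.obj (op A)) ≫
          deltaHatMap istar ishriek ipush adjS adjP D ψ φ can var ε γhat A =
        ε.hom.app (op A) ≫ D.map (can.app A).op := by
  intro A
  refine ⟨by unfold deltaHatMap; infer_instance, ?_⟩
  have hunit : φ.map (adjP.unit.app (D.obj (op A))) ≫ φ.map (γhat.inv.app (op A)) =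
      φ.map (D.map (adjS.counit.app A).op) := by
    rw [← φ.map_comp, hγhat, Category.assoc, Iso.hom_inv_id_app, Category.comp_id]
  have hε : φ.map (D.map (adjS.counit.app A).op) ≫ ε.hom.app (op (ishriek.obj (istar.obj A))) =
      ε.hom.app (op A) ≫ D.map (φ.map (adjS.counit.app A)).op :=
    ε.hom.naturality (adjS.counit.app A).op
  calc var.app (D.obj (op A)) ≫ deltaHatMap istar ishriek ipush adjS adjP D ψ φ can var ε γhat A
      = φ.map (adjP.unit.app (D.obj (op A))) ≫ φ.map (γhat.inv.app (op A)) ≫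
          ε.hom.app (op (ishriek.obj (istar.obj A))) ≫
            D.map (sigmaMap istar ishriek adjS ψ φ can A).op := by
        rw [deltaHatMap, ← Category.assoc, var_comp_inv_tauMap]
    _ = ε.hom.app (op A) ≫ D.map (can.app A).op := by
        rw [reassoc_of% hunit, reassoc_of% hε, ← D.map_comp, ← op_comp,
          sigmaMap_comp_map_counit]
end
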